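/- For every p ∈ ℕ^n, I_0^p attains its maximum over G_0^p at some û_p ∈ G_0^p, and for every j ∈ T_0^p with 0 < û_p(j) < (w_0 − v_0)(j), one has Σ_{k : ‖k − j‖ ≤ r} ∂_j S_k(û_p + v_0) = 0; that is, û_p + v_0 satisfies the equation (EL) at the point j (and hence, by periodicity, at every point congruent to j modulo p). -/

import Mathlib

open Filter Topology

namespace FK

noncomputable section

abbrev Zn (n : ℕ) := Fin n → ℤ

variable {n : ℕ}

/-- the ℓ¹ norm `‖i‖ = ∑ |i_j|` on `ℤⁿ` -/
def znorm (i : Zn n) : ℕ := ∑ j, (i j).natAbs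

/-- the finite ball `{j : ‖j - i‖ ≤ r}` as a `Finset` -/
def ball (r : ℕ) (i : Zn n) : Finset (Zn n) :=
  (Finset.Icc (fun m => i m - (r : ℤ)) (fun m => i m + (r : ℤ))).filter fun j => znorm (j - i) ≤ r

/-- the shift `(shift j u) i = u (i + j)`, i.e. `τ_{-jₙ}ⁿ ⋯ τ_{-j₁}¹ u` -/
def shift (j : Zn n) (u : Zn n → ℝ) : Zn n → ℝ := fun i => u (i + j)

/-- the local potential `S_j(u) = s(τ_{-j} u)` -/
def Spot (s : (Zn n → ℝ) → ℝ) (j : Zn n) (u : Zn n → ℝ) : ℝ := s (shift j u)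

/-- partial derivative `∂_i F(u)` of a functional `F` with respect to the coordinate `u(i)` -/
def pd (F : (Zn n → ℝ) → ℝ) (i : Zn n) (u : Zn n → ℝ) : ℝ :=
  deriv (fun t => F (Function.update u i t)) (u i)

/-- second partial derivative `∂_{i,k} F(u)` -/
def pd2 (F : (Zn n → ℝ) → ℝ) (i k : Zn n) (u : Zn n → ℝ) : ℝ :=
  pd (fun w => pd F k w) i u

/-- the gradient field `W(u)(i) = ∑_{j : ‖j-i‖ ≤ r} ∂_i S_j(u)` -/
def grad (r : ℕ) (s : (Zn n → ℝ) → ℝ) (u : Zn n → ℝ) : Zn n → ℝ :=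
  fun i => ∑ j ∈ ball r i, pd (Spot s j) i u

/-- `u` is a solution of the Euler–Lagrange equation (EL):
`∑_{j : ‖j-i‖ ≤ r} ∂_i S_j(u) = 0` for all `i` -/
def IsSolution (r : ℕ) (s : (Zn n → ℝ) → ℝ) (u : Zn n → ℝ) : Prop :=
  ∀ i, grad r s u i = 0

/-- the standard basis vector `e_m` -/
def unitv (m : Fin n) : Zn n := fun m' => if m' = m then 1 else 0

/-- the first standard basis vector `e₁` -/
def e1v : Zn n := fun m => if (m : ℕ) = 0 then 1 else 0

/-- `u` has period `p m` in the `m`-th coordinate direction, for every `m` -/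
def Periodic (p : Fin n → ℕ) (u : Zn n → ℝ) : Prop :=
  ∀ (i : Zn n) (m : Fin n), u (i + (p m : ℤ) • unitv m) = u i

/-- `u` is `1`-periodic in every coordinate direction -/
def PeriodicAll (u : Zn n → ℝ) : Prop := Periodic (fun _ => 1) u

/-- `J_0(u) = S_0(u)` -/
def J0 (s : (Zn n → ℝ) → ℝ) (u : Zn n → ℝ) : ℝ := Spot s 0 u

/-- `c_0 = inf J_0` over fully periodic configurations -/
def c0 (s : (Zn n → ℝ) → ℝ) : ℝ := sInf {y | ∃ u, PeriodicAll u ∧ J0 s u = y}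

/-- `M_0`, the set of fully periodic minimizers of `J_0` -/
def M0 (s : (Zn n → ℝ) → ℝ) : Set (Zn n → ℝ) := {u | PeriodicAll u ∧ J0 s u = c0 s}

/-- the fundamental domain `T_0^p = ∏_j {0, …, p_j - 1}` -/
def Tbox (p : Fin n → ℕ) : Finset (Zn n) :=
  Finset.Icc 0 fun m => (p m : ℤ) - 1

/-- `J_0^p(u) = ∑_{j ∈ T_0^p} S_j(u)` -/
def J0p (s : (Zn n → ℝ) → ℝ) (p : Fin n → ℕ) (u : Zn n → ℝ) : ℝ :=
  ∑ j ∈ Tbox p, Spot s j u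

/-- `c_0^p = inf J_0^p` over `Λ_0^p` -/
def c0p (s : (Zn n → ℝ) → ℝ) (p : Fin n → ℕ) : ℝ :=
  sInf {y | ∃ u, Periodic p u ∧ J0p s p u = y}

/-- `I_0^p(u) = J_0^p(u + v_0)` -/
def I0p (s : (Zn n → ℝ) → ℝ) (p : Fin n → ℕ) (v0 u : Zn n → ℝ) : ℝ :=
  J0p s p (u + v0)

/-- the norm `‖u‖_{Λ_0^p} = (∑_{j ∈ T_0^p} |u(j)|²)^{1/2}` -/
def lamNorm (p : Fin n → ℕ) (u : Zn n → ℝ) : ℝ :=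
  Real.sqrt (∑ j ∈ Tbox p, (u j) ^ 2)

/-- `G_0^p = {u ∈ Λ_0^p : 0 ≤ u ≤ w_0 - v_0}` -/
def G0 (p : Fin n → ℕ) (v0 w0 : Zn n → ℝ) : Set (Zn n → ℝ) :=
  {u | Periodic p u ∧ 0 ≤ u ∧ u ≤ w0 - v0}

/-- the isometric identification of `Λ_0^p` with the euclidean space `ℝ^{T_0^p}` -/
def toEuc (p : Fin n → ℕ) (u : Zn n → ℝ) : EuclideanSpace ℝ (Tbox (n := n) p) :=
  WithLp.toLp 2 (fun j : Tbox (n := n) p => u j.1)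

/-- inverse of `toEuc`: extend values on `T_0^p` `p`-periodically -/
def extendP (p : Fin n → ℕ) (x : EuclideanSpace ℝ (Tbox (n := n) p)) : Zn n → ℝ :=
  fun i => if h : (fun m => i m % (p m : ℤ)) ∈ Tbox p then x ⟨_, h⟩ else 0

/-- `I_0^p` read through the identification of `Λ_0^p` with euclidean space -/
def I0euc (s : (Zn n → ℝ) → ℝ) (p : Fin n → ℕ) (v0 : Zn n → ℝ) :
    EuclideanSpace ℝ (Tbox (n := n) p) → ℝ :=
  fun x => I0p s p v0 (extendP p x)

/-- `(I_0^p)'(u) = 0`: vanishing of the Fréchet derivative of `I_0^p` at `u`, computed through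
the isometric identification of `Λ_0^p` with euclidean space -/
def IsCrit0 (s : (Zn n → ℝ) → ℝ) (p : Fin n → ℕ) (v0 : Zn n → ℝ) (u : Zn n → ℝ) : Prop :=
  fderiv ℝ (I0euc s p v0) (toEuc p u) = 0

/-- membership in `H_0^p`: a norm-continuous path in `G_0^p` from `0` to `w_0 - v_0` -/
def PathIn (p : Fin n → ℕ) (v0 w0 : Zn n → ℝ) (h : ℝ → Zn n → ℝ) : Prop :=
  ContinuousOn (fun θ => toEuc p (h θ)) (Set.Icc 0 1) ∧
  (∀ θ ∈ Set.Icc (0 : ℝ) 1, h θ ∈ G0 p v0 w0) ∧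
  h 0 = 0 ∧ h 1 = w0 - v0

/-- the mountain pass level `d_0^p = inf_{h ∈ H_0^p} max_{θ ∈ [0,1]} I_0^p(h(θ))` -/
def d0p (s : (Zn n → ℝ) → ℝ) (p : Fin n → ℕ) (v0 w0 : Zn n → ℝ) : ℝ :=
  sInf {y | ∃ h, PathIn p v0 w0 h ∧
    y = sSup ((fun θ => I0p s p v0 (h θ)) '' Set.Icc 0 1)}

/-- `Φ` is the (negative gradient) semiflow of `I_0^p` on `Λ_0^p`:
`-∂_t Φ_t(u)(i) = ∑_{j : ‖j-i‖ ≤ r} ∂_i S_j(Φ_t(u) + v_0)`, `Φ_0(u) = u` -/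
def IsFlow (r : ℕ) (s : (Zn n → ℝ) → ℝ) (p : Fin n → ℕ) (v0 : Zn n → ℝ)
    (Φ : ℝ → (Zn n → ℝ) → (Zn n → ℝ)) : Prop :=
  (∀ u, Periodic p u → ∀ t, Periodic p (Φ t u)) ∧
  (∀ u, Φ 0 u = u) ∧
  (∀ u, Periodic p u → ∀ i, ∀ t ∈ Set.Ici (0 : ℝ),
    HasDerivWithinAt (fun τ => Φ τ u i) (-(grad r s (Φ t u + v0) i)) (Set.Ici 0) t)

/-- `p(k) = (k, 1, …, 1)` -/
def pk (n k : ℕ) : Fin n → ℕ := fun m => if (m : ℕ) = 0 then k else 1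

/-- `u` touches `v` from below -/
def TouchesBelow (u v : Zn n → ℝ) : Prop := u ≤ v ∧ u ≠ v ∧ ∃ i, u i = v i

/-- `θ̲_t = sup {θ ∈ [0,1] : Φ_t(h(θ)) ≤ u₀, Φ_t(h(θ)) ≠ u₀}` -/
def thetaLow (Φ : ℝ → (Zn n → ℝ) → (Zn n → ℝ)) (h : ℝ → Zn n → ℝ) (u0 : Zn n → ℝ)
    (t : ℝ) : ℝ :=
  sSup {θ | θ ∈ Set.Icc (0 : ℝ) 1 ∧ Φ t (h θ) ≤ u0 ∧ Φ t (h θ) ≠ u0}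

/-- `θ̄_t = inf {θ ∈ [0,1] : Φ_t(h(θ)) ≥ u₀, Φ_t(h(θ)) ≠ u₀}` -/
def thetaHigh (Φ : ℝ → (Zn n → ℝ) → (Zn n → ℝ)) (h : ℝ → Zn n → ℝ) (u0 : Zn n → ℝ)
    (t : ℝ) : ℝ :=
  sInf {θ | θ ∈ Set.Icc (0 : ℝ) 1 ∧ u0 ≤ Φ t (h θ) ∧ Φ t (h θ) ≠ u0}

/-- `s` read through the identification of `ℝ^{B_0^r}` with euclidean space (used to state that
`s ∈ C²(ℝ^{B_0^r}, ℝ)`) -/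
def sEuc (r : ℕ) (s : (Zn n → ℝ) → ℝ) : EuclideanSpace ℝ (ball r (0 : Zn n)) → ℝ :=
  fun x => s fun i => if h : i ∈ ball r (0 : Zn n) then x ⟨i, h⟩ else 0

/-- The standing assumptions on the generalized Frenkel–Kontorova model: `s ∈ C²(ℝ^{B_0^r}, ℝ)`
(encoded by `localized` and `smooth`) satisfying (S1)–(S4). -/
structure Setup (n r : ℕ) : Type where
  /-- the local potential -/
  s : (Zn n → ℝ) → ℝ
  npos : 0 < n
  /-- `s` only depends on the coordinates in `B_0^r` -/
  localized : ∀ u v : Zn n → ℝ, (∀ k, znorm k ≤ r → u k = v k) → s u = s v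
  /-- `s` is `C²` -/
  smooth : ContDiff ℝ 2 (sEuc r s)
  /-- (S1): periodicity -/
  S1 : ∀ u : Zn n → ℝ, s (fun i => u i + 1) = s u
  /-- (S2): bounded below -/
  S2_bddBelow : ∃ b : ℝ, ∀ u, b ≤ s u
  /-- (S2): coercivity -/
  S2_coercive : ∀ k j : Zn n, znorm k ≤ r → znorm j ≤ r → znorm (k - j) = 1 →
    ∀ M : ℝ, ∃ R : ℝ, ∀ u : Zn n → ℝ, R ≤ |u k - u j| → M ≤ s u
  /-- (S3): off-diagonal second partials nonpositive -/
  S3 : ∀ k j : Zn n, znorm k ≤ r → znorm j ≤ r → k ≠ j → ∀ u, pd2 s k j u ≤ 0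
  /-- (S3): strict negativity for nearest neighbours of `0` -/
  S3' : ∀ j : Zn n, znorm j = 1 → ∀ u, pd2 s 0 j u < 0
  /-- the constant of (S4) -/
  C : ℝ
  /-- (S4): uniformly bounded second partials -/
  S4 : ∀ i k : Zn n, znorm i ≤ r → znorm k ≤ r → ∀ u, |pd2 s i k u| ≤ C

/-- 1-periodicity in the directions `e_2, …, e_n` with periods `q` -/
def Periodic1 (q : Fin n → ℕ) (u : Zn n → ℝ) : Prop :=
  ∀ (i : Zn n) (m : Fin n), 1 ≤ (m : ℕ) → u (i + (q m : ℤ) • unitv m) = u i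

/-- the slab `{i} × T_1^q` as a `Finset` -/
def slab (q : Fin n → ℕ) (i : ℤ) : Finset (Zn n) :=
  Finset.Icc (fun m => if (m : ℕ) = 0 then i else 0)
    (fun m => if (m : ℕ) = 0 then i else (q m : ℤ) - 1)

/-- membership in `Λ_1^q` -/
def MemLam1 (q : Fin n → ℕ) (u : Zn n → ℝ) : Prop :=
  Periodic1 q u ∧ Summable fun i : ℤ => ∑ j ∈ slab q i, |u j|

/-- the norm `‖u‖_{Λ_1^q} = ∑_{ℤ × T_1^q} |u(j)| + (∑_{ℤ × T_1^q} |u(j)|²)^{1/2}` -/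
def lamNorm1 (q : Fin n → ℕ) (u : Zn n → ℝ) : ℝ :=
  (∑' i : ℤ, ∑ j ∈ slab q i, |u j|) + Real.sqrt (∑' i : ℤ, ∑ j ∈ slab q i, (u j) ^ 2)

/-- `J_1(u) = liminf_{p → -∞, q → ∞} ∑_{i=p}^q [J_0(τ^1_{-i} u) - c_0]` -/
def J1 (s : (Zn n → ℝ) → ℝ) (u : Zn n → ℝ) : ℝ :=
  liminf (fun pq : ℤ × ℤ => ∑ i ∈ Finset.Icc pq.1 pq.2, (Spot s (i • e1v) u - c0 s))
    (atBot ×ˢ atTop)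

/-- the class `Γ_1(v_0, w_0)` of heteroclinic configurations from `v_0` to `w_0` -/
def Gamma1 (v0 w0 : Zn n → ℝ) : Set (Zn n → ℝ) :=
  {u | Periodic1 (fun _ => 1) u ∧ v0 ≤ u ∧ u ≤ w0 ∧
    Tendsto (fun i : ℤ => u (i • e1v) - v0 (i • e1v)) atBot (nhds 0) ∧
    Tendsto (fun i : ℤ => u (i • e1v) - w0 (i • e1v)) atTop (nhds 0)}

/-- `c_1(v_0, w_0) = inf_{Γ_1(v_0,w_0)} J_1` -/
def c1 (s : (Zn n → ℝ) → ℝ) (v0 w0 : Zn n → ℝ) : ℝ :=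
  sInf {y | ∃ u ∈ Gamma1 v0 w0, J1 s u = y}

/-- `M_1(v_0, w_0)`, the minimizers of `J_1` on `Γ_1(v_0, w_0)` -/
def M1 (s : (Zn n → ℝ) → ℝ) (v0 w0 : Zn n → ℝ) : Set (Zn n → ℝ) :=
  {u | u ∈ Gamma1 v0 w0 ∧ J1 s u = c1 s v0 w0}

/-- `I_1^q(u) = liminf_{p → -∞, q' → ∞} ∑_{i=p}^{q'} ∑_{j ∈ {i} × T_1^q} [S_j(u + v_1) - c_0]` -/
def I1q (s : (Zn n → ℝ) → ℝ) (v1 : Zn n → ℝ) (q : Fin n → ℕ) (u : Zn n → ℝ) : ℝ :=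
  liminf (fun pq : ℤ × ℤ =>
      ∑ i ∈ Finset.Icc pq.1 pq.2, ∑ j ∈ slab q i, (Spot s j (u + v1) - c0 s))
    (atBot ×ˢ atTop)

/-- the pairing `(I_1^q)'(u) v = ∑_{i ∈ ℤ} ∑_{j ∈ {i} × T_1^q} v(j) ∑_{k : ‖k-j‖ ≤ r} ∂_j S_k(u + v_1)` -/
def pair1 (r : ℕ) (s : (Zn n → ℝ) → ℝ) (v1 : Zn n → ℝ) (q : Fin n → ℕ)
    (u v : Zn n → ℝ) : ℝ :=
  ∑' i : ℤ, ∑ j ∈ slab q i, v j * grad r s (u + v1) j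

/-- `(I_1^q)'(u) = 0` -/
def IsCrit1 (r : ℕ) (s : (Zn n → ℝ) → ℝ) (v1 : Zn n → ℝ) (q : Fin n → ℕ)
    (u : Zn n → ℝ) : Prop :=
  ∀ v, MemLam1 q v → pair1 r s v1 q u v = 0

/-- `G_1^q = {u ∈ Λ_1^q : 0 ≤ u ≤ w_1 - v_1}` -/
def G1 (q : Fin n → ℕ) (v1 w1 : Zn n → ℝ) : Set (Zn n → ℝ) :=
  {u | MemLam1 q u ∧ 0 ≤ u ∧ u ≤ w1 - v1}

/-- membership in `H_1^q`: a `‖·‖_{Λ_1^q}`-continuous path in `G_1^q` from `0` to `w_1 - v_1` -/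
def Path1 (q : Fin n → ℕ) (v1 w1 : Zn n → ℝ) (h : ℝ → Zn n → ℝ) : Prop :=
  (∀ θ ∈ Set.Icc (0 : ℝ) 1, h θ ∈ G1 q v1 w1) ∧ h 0 = 0 ∧ h 1 = w1 - v1 ∧
  ∀ θ ∈ Set.Icc (0 : ℝ) 1, ∀ ε > (0 : ℝ), ∃ δ > (0 : ℝ), ∀ θ' ∈ Set.Icc (0 : ℝ) 1,
    |θ' - θ| ≤ δ → lamNorm1 q (h θ' - h θ) ≤ ε

/-- the heteroclinic mountain pass level `d_1^q` -/
def d1q (s : (Zn n → ℝ) → ℝ) (v1 w1 : Zn n → ℝ) (q : Fin n → ℕ) : ℝ :=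
  sInf {y | ∃ h, Path1 q v1 w1 h ∧
    y = sSup ((fun θ => I1q s v1 q (h θ)) '' Set.Icc 0 1)}

/-- `q(k) = (k, 1, …, 1) ∈ ℕ^{n-1}` (indexed by the directions `e_2, …, e_n`) -/
def qk (n k : ℕ) : Fin n → ℕ := fun m => if (m : ℕ) = 1 then k else 1

-- aux lemmas batch 1
section Aux
variable {n r : ℕ}

lemma znorm_coord_le {i : Zn n} (m : Fin n) : (i m).natAbs ≤ znorm i := by
  unfold znorm
  exact Finset.single_le_sum (f := fun j => (i j).natAbs) (fun _ _ => Nat.zero_le _) (Finset.mem_univ m)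

lemma mem_ball_iff {i j : Zn n} : j ∈ ball r i ↔ znorm (j - i) ≤ r := by
  constructor
  · intro h; exact (Finset.mem_filter.mp h).2
  · intro h
    refine Finset.mem_filter.mpr ⟨Finset.mem_Icc.mpr ⟨?_, ?_⟩, h⟩ <;>
    · intro m
      dsimp only
      have := le_trans (znorm_coord_le (i := j - i) m) h
      simp only [Pi.sub_apply] at this
      omega

lemma mem_ball_zero {i : Zn n} : i ∈ ball r (0 : Zn n) ↔ znorm i ≤ r := by
  rw [mem_ball_iff, sub_zero]

/-- restriction to the ball -/
def restr (r : ℕ) (u : Zn n → ℝ) : EuclideanSpace ℝ (ball r (0 : Zn n)) :=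
  WithLp.toLp 2 (fun m => u m.1)

lemma s_eq (P : Setup n r) (u : Zn n → ℝ) : P.s u = sEuc r P.s (restr r u) := by
  unfold sEuc restr
  exact P.localized u _ (fun k hk => by rw [dif_pos (mem_ball_zero.mpr hk)])

end Aux

section Aux2
variable {n r : ℕ}

/-- congruence mod `p`, componentwise -/
def Cong (p : Fin n → ℕ) (i j : Zn n) : Prop := ∀ m, (i m - j m) % (p m : ℤ) = 0

instance (p : Fin n → ℕ) (i j : Zn n) : Decidable (Cong p i j) := by
  unfold Cong; infer_instance

lemma periodic_mul {p : Fin n → ℕ} {u : Zn n → ℝ} (hu : Periodic p u) (i : Zn n) (m : Fin n)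
    (c : ℤ) : u (i + (c * (p m : ℤ)) • unitv m) = u i := by
  induction c using Int.induction_on with
  | zero => simp
  | succ k ih =>
      have : i + ((k + 1 : ℤ) * (p m : ℤ)) • unitv m
          = (i + (k * (p m : ℤ)) • unitv m) + ((p m : ℤ)) • unitv m := by
        rw [add_assoc, ← add_smul]; ring_nf
      rw [this, hu _ m, ih]
  | pred k ih =>
      have : (i + ((-k - 1 : ℤ) * (p m : ℤ)) • unitv m) + ((p m : ℤ)) • unitv m
          = i + ((-k : ℤ) * (p m : ℤ)) • unitv m := by
        rw [add_assoc, ← add_smul]; ring_nf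
      have h2 := hu (i + ((-k - 1 : ℤ) * (p m : ℤ)) • unitv m) m
      rw [this] at h2
      rw [h2] at ih; exact ih

lemma decomp (v : Zn n) : v = ∑ m, v m • unitv m := by
  funext m'
  rw [Finset.sum_apply]
  simp only [Pi.smul_apply, unitv, smul_eq_mul, mul_ite, mul_one, mul_zero]
  rw [Finset.sum_ite_eq Finset.univ m' v]
  simp

lemma periodic_sum {p : Fin n → ℕ} {u : Zn n → ℝ} (hu : Periodic p u) (i : Zn n)
    (c : Fin n → ℤ) (hc : ∀ m, (c m) % (p m : ℤ) = 0) (S : Finset (Fin n)) :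
    u (i + ∑ m ∈ S, c m • unitv m) = u i := by
  induction S using Finset.induction_on with
  | empty => simp
  | @insert a S' hm ih =>
      rw [Finset.sum_insert hm]
      have hd : c a = (c a / (p a : ℤ)) * (p a : ℤ) := by
        rw [Int.ediv_mul_cancel]
        exact Int.dvd_of_emod_eq_zero (hc a)
      have : i + (c a • unitv a + ∑ m ∈ S', c m • unitv m)
          = (i + ∑ m ∈ S', c m • unitv m) + ((c a / (p a : ℤ)) * (p a : ℤ)) • unitv a := by
        rw [← hd]; abel
      rw [this, periodic_mul hu _ a, ih]

lemma periodic_congr {p : Fin n → ℕ} {u : Zn n → ℝ} (hu : Periodic p u) {i j : Zn n}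
    (h : Cong p i j) : u i = u j := by
  have : i = j + ∑ m, (i m - j m) • unitv m := by
    conv_lhs => rw [show i = j + (i - j) by abel, decomp (i - j)]
    simp [Pi.sub_apply]
  rw [this, periodic_sum hu j _ (fun m => h m)]

lemma periodicAll_periodic {u : Zn n → ℝ} (hu : PeriodicAll u) (p : Fin n → ℕ) :
    Periodic p u := by
  intro i m
  have := periodic_mul (p := fun _ => 1) hu i m (p m)
  simpa using this

lemma cong_refl (p : Fin n → ℕ) (i : Zn n) : Cong p i i := by intro m; simp

lemma cong_shift (p : Fin n → ℕ) (i j : Zn n) (m : Fin n) (h : Cong p i j) :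
    Cong p (i + (p m : ℤ) • unitv m) j := by
  intro m'
  have : (i + (p m : ℤ) • unitv m) m' - j m' = (i m' - j m') + (p m : ℤ) * (unitv m m') := by
    simp [Pi.add_apply, Pi.smul_apply]; ring
  rw [this]
  rcases eq_or_ne m' m with rfl | hne
  · simp [unitv, Int.add_mul_emod_self_left, h m']
  · simp [unitv, hne, h m']

end Aux2

section Aux3
variable {n r : ℕ}

lemma shift_update (k j : Zn n) (w : Zn n → ℝ) (t : ℝ) :
    shift k (Function.update w j t) = Function.update (shift k w) (j - k) t := by
  funext i
  simp only [shift, Function.update_apply]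
  have : i + k = j ↔ i = j - k := by
    constructor <;> intro h
    · rw [← h]; abel
    · rw [h]; abel
  rw [if_congr this rfl rfl]

lemma pd_spot (s : (Zn n → ℝ) → ℝ) (k j : Zn n) (w : Zn n → ℝ) :
    pd (Spot s k) j w = pd s (j - k) (shift k w) := by
  unfold pd Spot
  have h1 : (fun t => s (shift k (Function.update w j t)))
      = fun t => s (Function.update (shift k w) (j - k) t) := by
    funext t; rw [shift_update]
  have h2 : w j = shift k w (j - k) := by
    simp only [shift]; congr 1; abel
  rw [h1, h2]

lemma restr_update {m : Zn n} (hm : m ∈ ball r (0 : Zn n)) (u : Zn n → ℝ) (t : ℝ) :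
    restr r (Function.update u m t)
      = restr r u + (t - u m) • EuclideanSpace.single ⟨m, hm⟩ (1 : ℝ) := by
  ext m'
  simp only [restr, PiLp.toLp_apply, PiLp.add_apply, PiLp.smul_apply, EuclideanSpace.single_apply,
    Function.update_apply, smul_eq_mul]
  rcases eq_or_ne m' ⟨m, hm⟩ with rfl | hne
  · simp
  · have : (m' : Zn n) ≠ m := fun h => hne (Subtype.ext h)
    simp [this, hne]

lemma hasDerivAt_line (P : Setup n r) (a d : EuclideanSpace ℝ (ball r (0 : Zn n))) (t0 : ℝ) :
    HasDerivAt (fun t => sEuc r P.s (a + (t - t0) • d))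
      (fderiv ℝ (sEuc r P.s) a d) t0 := by
  have hg : HasDerivAt (fun t : ℝ => a + (t - t0) • d) d t0 := by
    have h1 : HasDerivAt (fun t : ℝ => (t - t0)) 1 t0 := (hasDerivAt_id t0).sub_const t0
    have := (h1.smul_const d).const_add a
    simpa using this
  have hs : HasFDerivAt (sEuc r P.s) (fderiv ℝ (sEuc r P.s) (a + (t0 - t0) • d))
      (a + (t0 - t0) • d) :=
    ((P.smooth.differentiable two_ne_zero) _).hasFDerivAt
  have := hs.comp_hasDerivAt t0 hg
  simp only [sub_self, zero_smul, add_zero] at this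
  exact this

lemma pd_eq (P : Setup n r) {m : Zn n} (hm : m ∈ ball r (0 : Zn n)) (u : Zn n → ℝ) :
    pd P.s m u = fderiv ℝ (sEuc r P.s) (restr r u)
      (EuclideanSpace.single ⟨m, hm⟩ (1 : ℝ)) := by
  unfold pd
  have h1 : (fun t => P.s (Function.update u m t))
      = fun t => sEuc r P.s (restr r u + (t - u m) • EuclideanSpace.single ⟨m, hm⟩ (1:ℝ)) := by
    funext t; rw [s_eq P, restr_update hm]
  rw [h1]
  exact (hasDerivAt_line P _ _ (u m)).deriv

lemma euc_expand {ι : Type*} [Fintype ι] [DecidableEq ι]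
    (L : EuclideanSpace ℝ ι →L[ℝ] ℝ) (v : EuclideanSpace ℝ ι) :
    L v = ∑ m, v m * L (EuclideanSpace.single m (1 : ℝ)) := by
  have hv : v = ∑ m, v m • EuclideanSpace.single m (1 : ℝ) := by
    ext m'
    rw [WithLp.ofLp_sum, Finset.sum_apply]
    simp only [PiLp.smul_apply, EuclideanSpace.single_apply, smul_eq_mul, mul_ite, mul_one,
      mul_zero]
    rw [Finset.sum_ite_eq Finset.univ m' (fun m => v m)]
    simp
  conv_lhs => rw [hv]
  rw [map_sum]
  simp [smul_eq_mul]

end Aux3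

section Aux4
variable {n r : ℕ}

lemma znorm_neg (v : Zn n) : znorm (-v) = znorm v := by
  unfold znorm
  congr 1; funext m; simp

lemma mem_ball_sub {j k : Zn n} (hk : k ∈ ball r j) : j - k ∈ ball r (0 : Zn n) := by
  rw [mem_ball_zero]
  rw [mem_ball_iff] at hk
  have : j - k = -(k - j) := by abel
  rw [this, znorm_neg]
  exact hk

lemma mem_ball_sub' {j m : Zn n} (hm : m ∈ ball r (0 : Zn n)) : j - m ∈ ball r j := by
  rw [mem_ball_iff]
  rw [mem_ball_zero] at hm
  have : j - m - j = -m := by abel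
  rw [this, znorm_neg]
  exact hm

lemma grad_eq (P : Setup n r) (w : Zn n → ℝ) (j : Zn n) :
    grad r P.s w j = ∑ m ∈ (ball r (0 : Zn n)).attach,
      fderiv ℝ (sEuc r P.s) (restr r (shift (j - m.1) w)) (EuclideanSpace.single m (1 : ℝ)) := by
  unfold grad
  rw [← Finset.sum_attach (ball r j) (fun k => pd (Spot P.s k) j w)]
  refine Finset.sum_bij' (fun (k : {x // x ∈ ball r j}) _ => (⟨j - k.1, mem_ball_sub k.2⟩ :
      {x // x ∈ ball r (0 : Zn n)}))
    (fun (m : {x // x ∈ ball r (0 : Zn n)}) _ => (⟨j - m.1, mem_ball_sub' m.2⟩ :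
      {x // x ∈ ball r j})) (fun _ _ => Finset.mem_attach _ _) (fun _ _ => Finset.mem_attach _ _)
    ?_ ?_ ?_
  · intro k _; apply Subtype.ext; simp only; abel
  · intro m _; apply Subtype.ext; simp only; abel
  · intro k _
    rw [pd_spot, pd_eq P (mem_ball_sub k.2) (shift k.1 w)]
    have hkk : j - (j - k.1) = (k.1 : Zn n) := by abel
    simp only [hkk]

end Aux4

section Aux5
variable {n r : ℕ}

lemma mem_Tbox {p : Fin n → ℕ} {k : Zn n} :
    k ∈ Tbox p ↔ ∀ m, 0 ≤ k m ∧ k m ≤ (p m : ℤ) - 1 := by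
  unfold Tbox
  rw [Finset.mem_Icc]
  constructor
  · intro ⟨h1, h2⟩ m; exact ⟨h1 m, h2 m⟩
  · intro h; exact ⟨fun m => (h m).1, fun m => (h m).2⟩

lemma emod_mem_Tbox {p : Fin n → ℕ} (hp : ∀ m, 1 ≤ p m) (v : Zn n) :
    (fun m' => v m' % (p m' : ℤ)) ∈ Tbox p := by
  rw [mem_Tbox]
  intro m
  have h0 : (0 : ℤ) < (p m : ℤ) := by exact_mod_cast hp m
  constructor
  · exact Int.emod_nonneg _ (by omega)
  · have := Int.emod_lt_of_pos (v m) h0; omega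

lemma cong_emod (p : Fin n → ℕ) (v : Zn n) : Cong p (fun m' => v m' % (p m' : ℤ)) v := by
  intro m
  simp only
  rw [Int.sub_emod, Int.emod_emod_of_dvd _ dvd_rfl, sub_self, Int.zero_emod]

lemma eq_emod_of_Tbox {p : Fin n → ℕ} {k v : Zn n} (hk : k ∈ Tbox p) (h : Cong p k v) :
    k = fun m' => v m' % (p m' : ℤ) := by
  funext m
  rw [mem_Tbox] at hk
  have h1 : k m % (p m : ℤ) = v m % (p m : ℤ) := Int.ModEq.symm (Int.modEq_iff_dvd.mpr
    (Int.dvd_of_emod_eq_zero (h m)))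
  have h2 : k m % (p m : ℤ) = k m :=
    Int.emod_eq_of_lt (hk m).1 (by have := (hk m).2; omega)
  rw [← h2, h1]

lemma shift_congr {p : Fin n → ℕ} {w : Zn n → ℝ} (hw : Periodic p w) {a b : Zn n}
    (h : Cong p a b) : shift a w = shift b w := by
  funext i
  exact periodic_congr hw (fun m => by
    have : (i + a) m - (i + b) m = a m - b m := by simp [Pi.add_apply]
    rw [this]; exact h m)

lemma sum_deriv_eq (P : Setup n r) {p : Fin n → ℕ} (hp : ∀ m, 1 ≤ p m)
    {w : Zn n → ℝ} (hw : Periodic p w) (j : Zn n) :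
    ∑ k ∈ Tbox p, fderiv ℝ (sEuc r P.s) (restr r (shift k w))
      (restr r (shift k (fun i => if Cong p i j then (1 : ℝ) else 0)))
    = grad r P.s w j := by
  have hexp : ∀ k, fderiv ℝ (sEuc r P.s) (restr r (shift k w))
      (restr r (shift k (fun i => if Cong p i j then (1 : ℝ) else 0)))
      = ∑ m ∈ (ball r (0 : Zn n)).attach,
          (if Cong p (m.1 + k) j then (1 : ℝ) else 0)
          * fderiv ℝ (sEuc r P.s) (restr r (shift k w)) (EuclideanSpace.single m (1 : ℝ)) := by
    intro k
    rw [euc_expand, Finset.univ_eq_attach]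
    exact Finset.sum_congr rfl (fun m _ => rfl)
  simp only [hexp]
  rw [Finset.sum_comm]
  rw [grad_eq P w j]
  refine Finset.sum_congr rfl ?_
  intro m _
  set k0 : Zn n := fun m' => (j - m.1) m' % (p m' : ℤ) with hk0
  have hk0mem : k0 ∈ Tbox p := emod_mem_Tbox hp _
  have hcong0 : Cong p (m.1 + k0) j := by
    intro m'
    have : (m.1 + k0) m' - j m' = k0 m' - (j - m.1) m' := by
      simp [Pi.add_apply, Pi.sub_apply]; ring
    rw [this]
    exact cong_emod p (j - m.1) m'
  rw [Finset.sum_eq_single k0]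
  · rw [if_pos hcong0, one_mul]
    have : shift k0 w = shift (j - m.1) w :=
      shift_congr hw (cong_emod p (j - m.1))
    rw [this]
  · intro k hk hne
    rw [if_neg, zero_mul]
    intro hc
    apply hne
    have : Cong p k (j - m.1) := by
      intro m'
      have he : k m' - (j - m.1) m' = (m.1 + k) m' - j m' := by
        simp [Pi.add_apply, Pi.sub_apply]; ring
      rw [he]; exact hc m'
    exact eq_emod_of_Tbox hk this
  · intro hmem; exact absurd hk0mem hmem

end Aux5

section Aux6
variable {n r : ℕ}

lemma extendP_apply {p : Fin n → ℕ} (hp : ∀ m, 1 ≤ p m) (x : EuclideanSpace ℝ (Tbox (n := n) p))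
    (i : Zn n) : extendP p x i = x ⟨fun m => i m % (p m : ℤ), emod_mem_Tbox hp i⟩ := by
  unfold extendP
  rw [dif_pos (emod_mem_Tbox hp i)]

lemma extendP_periodic {p : Fin n → ℕ} (hp : ∀ m, 1 ≤ p m)
    (x : EuclideanSpace ℝ (Tbox (n := n) p)) : Periodic p (extendP p x) := by
  intro i m
  rw [extendP_apply hp, extendP_apply hp]
  refine congrArg (fun y => x y) ?_
  apply Subtype.ext
  funext m'
  simp only [Pi.add_apply, Pi.smul_apply, unitv, smul_eq_mul]
  rcases eq_or_ne m' m with rfl | hne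
  · simp [Int.add_mul_emod_self_left]
  · simp [hne]

lemma extendP_toEuc {p : Fin n → ℕ} (hp : ∀ m, 1 ≤ p m) {u : Zn n → ℝ}
    (hu : Periodic p u) : extendP p (toEuc p u) = u := by
  funext i
  rw [extendP_apply hp]
  show u (fun m => i m % (p m : ℤ)) = u i
  exact periodic_congr hu (cong_emod p i)

lemma cong_shift' (p : Fin n → ℕ) (i j : Zn n) (m : Fin n) (c : ℤ) (h : Cong p i j) :
    Cong p (i + (c * (p m : ℤ)) • unitv m) j := by
  intro m'
  have : (i + (c * (p m : ℤ)) • unitv m) m' - j m'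
      = (i m' - j m') + (c * (p m : ℤ)) * (unitv m m') := by
    simp only [Pi.add_apply, Pi.smul_apply, smul_eq_mul]; ring
  rw [this]
  rcases eq_or_ne m' m with rfl | hne
  · rw [show (unitv m' m' : ℤ) = 1 by simp [unitv], mul_one,
      show i m' - j m' + c * (p m' : ℤ) = i m' - j m' + (p m' : ℤ) * c by ring,
      Int.add_mul_emod_self_left]
    exact h m'
  · simp [unitv, hne, h m']

lemma cong_add_unitv_iff (p : Fin n → ℕ) (i j : Zn n) (m : Fin n) :
    Cong p (i + (p m : ℤ) • unitv m) j ↔ Cong p i j := by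
  constructor
  · intro h
    have : i = (i + (p m : ℤ) • unitv m) + ((-1 : ℤ) * (p m : ℤ)) • unitv m := by
      funext m'; simp only [Pi.add_apply, Pi.smul_apply, smul_eq_mul]; ring
    rw [this]
    exact cong_shift' p _ j m (-1) h
  · intro h
    have : (p m : ℤ) • unitv m = ((1 : ℤ) * (p m : ℤ)) • unitv m := by rw [one_mul]
    rw [this]
    exact cong_shift' p i j m 1 h

lemma periodic_ite_cong (p : Fin n → ℕ) (j : Zn n) :
    Periodic p (fun i => if Cong p i j then (1 : ℝ) else 0) := by
  intro i m
  simp only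
  rw [if_congr (cong_add_unitv_iff p i j m) rfl rfl]

end Aux6

/-- `I_0^p` attains its maximum on `G_0^p` at some `û_p`, and at every `j ∈ T_0^p`
where `0 < û_p(j) < (w_0 - v_0)(j)` the configuration `û_p + v_0` satisfies the equation (EL). -/
theorem statement7 {n r : ℕ} (P : Setup n r) (v0 w0 : Zn n → ℝ)
    (hv0 : v0 ∈ M0 P.s) (hw0 : w0 ∈ M0 P.s) (hlt : ∀ i, v0 i < w0 i)
    (hadj : ∀ u ∈ M0 P.s, u ≠ v0 → u ≠ w0 → ¬(v0 ≤ u ∧ u ≤ w0))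
    (p : Fin n → ℕ) (hp : ∀ m, 1 ≤ p m) :
    ∃ uh ∈ G0 p v0 w0,
      (∀ u ∈ G0 p v0 w0, I0p P.s p v0 u ≤ I0p P.s p v0 uh) ∧
      ∀ j ∈ Tbox p, 0 < uh j → uh j < w0 j - v0 j →
        grad r P.s (uh + v0) j = 0 := by
  classical
  have hv0per : Periodic p v0 := periodicAll_periodic hv0.1 p
  have hw0per : Periodic p w0 := periodicAll_periodic hw0.1 p
  have hWper : Periodic p (w0 - v0) := by
    intro i m
    simp only [Pi.sub_apply, hv0per i m, hw0per i m]
  -- the compact box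
  set K : Set (EuclideanSpace ℝ (Tbox (n := n) p)) :=
    {x | ∀ jj : {y // y ∈ Tbox (n := n) p}, x jj ∈ Set.Icc 0 ((w0 - v0) jj.1)} with hK
  have hKeq : K = (PiLp.continuousLinearEquiv 2 ℝ
        fun _ : {y // y ∈ Tbox (n := n) p} => ℝ).toHomeomorph ⁻¹'
      (Set.univ.pi fun jj => Set.Icc 0 ((w0 - v0) jj.1)) := by
    ext x
    constructor
    · intro hx
      rw [Set.mem_preimage, Set.mem_pi]
      intro jj _
      exact hx jj
    · intro hx jj
      exact (Set.mem_pi.mp hx) jj (Set.mem_univ _)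
  have hKcomp : IsCompact K := by
    rw [hKeq]
    exact (Homeomorph.isCompact_preimage _).mpr (isCompact_univ_pi fun jj => isCompact_Icc)
  have hK0 : (0 : EuclideanSpace ℝ (Tbox (n := n) p)) ∈ K := by
    intro jj
    rw [Set.mem_Icc]
    constructor
    · rfl
    · have := hlt jj.1
      simp only [Pi.sub_apply]
      show (0 : ℝ) ≤ _
      linarith
  have hfc : Continuous (fun x : EuclideanSpace ℝ (Tbox (n := n) p) =>
      I0p P.s p v0 (extendP p x)) := by
    have hfe : (fun x : EuclideanSpace ℝ (Tbox (n := n) p) => I0p P.s p v0 (extendP p x))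
        = fun x => ∑ k ∈ Tbox p,
        sEuc r P.s (restr r (shift k (extendP p x + v0))) := by
      funext x
      unfold I0p J0p
      exact Finset.sum_congr rfl fun k _ => by rw [Spot, s_eq P]
    rw [hfe]
    refine continuous_finset_sum _ fun k _ => (P.smooth.continuous).comp ?_
    have hcoord : Continuous fun x : EuclideanSpace ℝ (Tbox (n := n) p) =>
        (fun m : {y // y ∈ ball r (0 : Zn n)} =>
          extendP p x (m.1 + k) + v0 (m.1 + k)) := by
      refine continuous_pi fun m => ?_
      have he : (fun x : EuclideanSpace ℝ (Tbox (n := n) p) => extendP p x (m.1 + k)) =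
          fun x => x ⟨fun m' => (m.1 + k) m' % (p m' : ℤ), emod_mem_Tbox hp _⟩ := by
        funext x; rw [extendP_apply hp]
      refine Continuous.add ?_ continuous_const
      rw [he]
      exact (continuous_apply _).comp (PiLp.continuous_ofLp _ _)
    exact (PiLp.continuous_toLp _ _).comp hcoord
  obtain ⟨xh, hxhK, hxmax⟩ := hKcomp.exists_isMaxOn ⟨0, hK0⟩ hfc.continuousOn
  set uh := extendP p xh with huh
  have huhper : Periodic p uh := extendP_periodic hp xh
  have hbd : ∀ i, 0 ≤ uh i ∧ uh i ≤ (w0 - v0) i := by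
    intro i
    rw [huh, extendP_apply hp]
    have h2 := hxhK ⟨fun m => i m % (p m : ℤ), emod_mem_Tbox hp i⟩
    rw [Set.mem_Icc] at h2
    exact ⟨h2.1, le_trans h2.2 (le_of_eq (periodic_congr hWper (cong_emod p i)))⟩
  have hmaxG : ∀ u ∈ G0 p v0 w0, I0p P.s p v0 u ≤ I0p P.s p v0 uh := by
    rintro u ⟨huper, hul, huu⟩
    have hmem : toEuc p u ∈ K := by
      intro jj
      rw [Set.mem_Icc]
      exact ⟨hul jj.1, huu jj.1⟩
    have h3 : I0p P.s p v0 (extendP p (toEuc p u)) ≤ I0p P.s p v0 (extendP p xh) :=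
      hxmax hmem
    rwa [extendP_toEuc hp huper] at h3
  refine ⟨uh, ⟨huhper, Pi.le_def.mpr fun i => (hbd i).1,
    Pi.le_def.mpr fun i => (hbd i).2⟩, hmaxG, ?_⟩
  intro j hj hj0 hj1
  set d : Zn n → ℝ := fun i => if Cong p i j then (1 : ℝ) else 0 with hd
  have hdper : Periodic p d := by rw [hd]; exact periodic_ite_cong p j
  set t0 := uh j with ht0
  set φ : ℝ → ℝ := fun t => I0p P.s p v0 (fun i => uh i + (t - t0) * d i) with hφ
  have hwper : Periodic p (uh + v0) := by
    intro i m
    simp only [Pi.add_apply, huhper i m, hv0per i m]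
  have hφeq : φ = fun t => ∑ k ∈ Tbox p,
      sEuc r P.s (restr r (shift k (uh + v0)) + (t - t0) • restr r (shift k d)) := by
    funext t
    rw [hφ]
    unfold I0p J0p
    refine Finset.sum_congr rfl fun k _ => ?_
    rw [Spot, s_eq P]
    congr 1
    ext m
    simp only [restr, PiLp.toLp_apply, shift, Pi.add_apply, PiLp.add_apply, PiLp.smul_apply, smul_eq_mul]
    ring
  have hder : HasDerivAt φ (grad r P.s (uh + v0) j) t0 := by
    rw [hφeq, ← sum_deriv_eq P hp hwper j]
    have hsum := HasDerivAt.fun_sum (fun k (_ : k ∈ Tbox p) =>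
      hasDerivAt_line P (restr r (shift k (uh + v0))) (restr r (shift k d)) t0)
    rw [hd] at hsum
    exact hsum
  have hIcc : Set.Icc (0 : ℝ) (w0 j - v0 j) ∈ nhds t0 := Icc_mem_nhds hj0 hj1
  have hloc : IsLocalMax φ t0 := by
    have hφt0 : φ t0 = I0p P.s p v0 uh := by
      rw [hφ]
      show I0p P.s p v0 (fun i => uh i + (t0 - t0) * d i) = I0p P.s p v0 uh
      have h4 : (fun i => uh i + (t0 - t0) * d i) = uh := by funext i; ring
      rw [h4]
    refine Filter.eventually_of_mem hIcc fun t ht => ?_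
    rw [Set.mem_Icc] at ht
    have hmem : (fun i => uh i + (t - t0) * d i) ∈ G0 p v0 w0 := by
      refine ⟨?_, Pi.le_def.mpr fun i => ?_, Pi.le_def.mpr fun i => ?_⟩
      · intro i m
        simp only
        rw [huhper i m, hdper i m]
      · by_cases hc : Cong p i j
        · have h1 : d i = 1 := by rw [hd]; exact if_pos hc
          have h2 : uh i = t0 := by rw [ht0]; exact periodic_congr huhper hc
          show (0 : ℝ) ≤ _
          rw [h1, h2]; linarith [ht.1]
        · have h1 : d i = 0 := by rw [hd]; exact if_neg hc
          show (0 : ℝ) ≤ _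
          rw [h1]; simpa using (hbd i).1
      · by_cases hc : Cong p i j
        · have h1 : d i = 1 := by rw [hd]; exact if_pos hc
          have h2 : uh i = t0 := by rw [ht0]; exact periodic_congr huhper hc
          have h3 : (w0 - v0) i = w0 j - v0 j := by
            have := periodic_congr hWper hc
            simpa [Pi.sub_apply] using this
          show _ ≤ (w0 - v0) i
          rw [h1, h2, h3]; linarith [ht.2]
        · have h1 : d i = 0 := by rw [hd]; exact if_neg hc
          show _ ≤ (w0 - v0) i
          rw [h1]; simpa using (hbd i).2
    have := hmaxG _ hmem
    show φ t ≤ φ t0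
    rw [hφt0, hφ]
    exact this
  have h0 := hloc.deriv_eq_zero
  rw [hder.deriv] at h0
  exact h0

end

end FK
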